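/- arXiv:2012.11756 — 7 statements merged into one kernel-verified Lean document; each statement's English description precedes it below -/
import Mathlib

section
/- For every positive integer x, the sum over i from 1 to x of M(⌊x/i⌋)·log(i) equals ψ(x), the second Chebyshev function. -/
open Finset ArithmeticFunction

/-- The Mertens function `M(n) = ∑_{k=1}^n μ(k)`. -/
def mertens (n : ℕ) : ℤ := ∑ k ∈ Finset.Icc 1 n, ArithmeticFunction.moebius k

lemma Nat.Icc_one_eq_Ioc_zero (n : ℕ) : Icc 1 n = Ioc 0 n :=
  Icc_add_one_left_eq_Ioc 0 n

lemma mertens_cast_eq_sum_Ioc (n : ℕ) :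
    (mertens n : ℝ) = ∑ k ∈ Ioc 0 n, (moebius : ArithmeticFunction ℝ) k := by
  simp [mertens, Nat.Icc_one_eq_Ioc_zero, intCoe_apply]

theorem stmt4_general (x : ℕ) :
    ∑ i ∈ Finset.Icc 1 x, (mertens (x / i) : ℝ) * Real.log i =
      ∑ i ∈ Finset.Icc 1 x, ArithmeticFunction.vonMangoldt i := by
  calc ∑ i ∈ Icc 1 x, (mertens (x / i) : ℝ) * Real.log i
      = ∑ i ∈ Ioc 0 x, log i * ∑ k ∈ Ioc 0 (x / i), (moebius : ArithmeticFunction ℝ) k := by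
        simp only [Nat.Icc_one_eq_Ioc_zero, mertens_cast_eq_sum_Ioc, log_apply, mul_comm]
    _ = ∑ i ∈ Ioc 0 x, (log * (moebius : ArithmeticFunction ℝ)) i :=
        (sum_Ioc_mul_eq_sum_sum _ _ x).symm
    _ = ∑ i ∈ Icc 1 x, vonMangoldt i := by
        rw [log_mul_moebius_eq_vonMangoldt, Nat.Icc_one_eq_Ioc_zero]

theorem stmt4 (x : ℕ) (hx : 0 < x) :
    ∑ i ∈ Finset.Icc 1 x, (mertens (x / i) : ℝ) * Real.log i =
      ∑ i ∈ Finset.Icc 1 x, ArithmeticFunction.vonMangoldt i :=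
  stmt4_general x
end

section
/- For every positive integer x, the sum over i from 1 to x of M(⌊x/i⌋)·log(i)·σ₀(i)/2 equals log(x!). -/
/-!
Pairing each divisor `d` of `i` with `i / d` gives `log i · σ₀(i) / 2 = ∑_{d ∣ i} log d`, i.e. the
summand is `M(x/i) · (log * ζ)(i)`. Grouping `∑_{i ≤ x} M(x/i) g(i)` by `n = i j` turns it into
`∑_{n ≤ x} (g * μ)(n)`, and for `g = log * ζ` Möbius inversion leaves `∑_{n ≤ x} log n = log x!`.
-/

open Finset ArithmeticFunction

open scoped ArithmeticFunction.Moebius ArithmeticFunction.zeta ArithmeticFunction.sigma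

theorem mertens_eq_sum_Ioc {R : Type*} [AddCommGroupWithOne R] (n : ℕ) :
    (mertens n : R) = ∑ m ∈ Ioc 0 n, (μ m : R) := by
  rw [mertens, Int.cast_sum, ← Icc_add_one_left_eq_Ioc]
  rfl

theorem sum_Ioc_mertens_div_mul_mul_zeta {R : Type*} [CommRing R] (f : ArithmeticFunction R)
    (N : ℕ) : ∑ n ∈ Ioc 0 N, (mertens (N / n) : R) * (f * ζ) n = ∑ n ∈ Ioc 0 N, f n := by
  have inversion : f * ζ * μ = f := by rw [mul_assoc, coe_zeta_mul_coe_moebius, mul_one]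
  conv_rhs => rw [← inversion, sum_Ioc_mul_eq_sum_sum]
  refine sum_congr rfl fun n _ => ?_
  simp only [mul_comm, mertens_eq_sum_Ioc, intCoe_apply]

theorem sum_divisors_log (n : ℕ) :
    ∑ d ∈ n.divisors, Real.log d = Real.log n * σ 0 n / 2 := by
  have pair : ∀ d ∈ n.divisors, Real.log d + Real.log (n / d : ℕ) = Real.log n := by
    intro d hd
    obtain ⟨hdn, hn⟩ := Nat.mem_divisors.mp hd
    have hprod : d * (n / d) = n := Nat.mul_div_cancel' hdn
    obtain ⟨hd0, hnd0⟩ := mul_ne_zero_iff.mp (hprod ▸ hn)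
    rw [← Real.log_mul (by exact_mod_cast hd0) (by exact_mod_cast hnd0), ← Nat.cast_mul, hprod]
  have total := sum_congr rfl pair
  rw [sum_add_distrib, Nat.sum_div_divisors n fun d => Real.log d, sum_const, nsmul_eq_mul]
    at total
  rw [sigma_zero_apply]
  linarith

theorem sum_Ioc_log_eq_log_factorial (N : ℕ) :
    ∑ n ∈ Ioc 0 N, Real.log n = Real.log N.factorial := by
  induction N with
  | zero => simp
  | succ N ih =>
    rw [sum_Ioc_succ_top (Nat.zero_le _), ih, Nat.factorial_succ, Nat.cast_mul,
      Real.log_mul (by positivity) (by positivity), add_comm]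

theorem stmt5_general (x : ℕ) :
    ∑ i ∈ Finset.Icc 1 x,
        (mertens (x / i) : ℝ) * Real.log i * (ArithmeticFunction.sigma 0 i : ℝ) / 2 =
      Real.log (Nat.factorial x) := by
  calc _ = ∑ i ∈ Ioc 0 x, (mertens (x / i) : ℝ) * (ArithmeticFunction.log * ζ) i := by
        refine sum_congr (Icc_add_one_left_eq_Ioc 0 x) fun i _ => ?_
        simp only [coe_mul_zeta_apply, log_apply, sum_divisors_log]
        ring
    _ = ∑ n ∈ Ioc 0 x, Real.log n := sum_Ioc_mertens_div_mul_mul_zeta _ x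
    _ = _ := sum_Ioc_log_eq_log_factorial x

theorem stmt5 (x : ℕ) (hx : 0 < x) :
    ∑ i ∈ Finset.Icc 1 x,
        (mertens (x / i) : ℝ) * Real.log i * (ArithmeticFunction.sigma 0 i : ℝ) / 2 =
      Real.log (Nat.factorial x) :=
  stmt5_general x
end

section
/- For every positive integer x, the sum over i from 1 to x of M(⌊x/i⌋)·2^{ω(i)} equals Σ_{i=1}^x |μ(i)|, the number of squarefree integers up to x. -/
open Finset ArithmeticFunction

/-!
Let `s = pmul μ μ` be the indicator of the squarefree numbers. For `n ≠ 0`, `(ζ * s) n` counts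
the squarefree divisors of `n`, which are the products of subsets of its prime factors, so
`(ζ * s) n = 2 ^ ω n`. Hence the left-hand side is `∑_{i ≤ x} M(x / i) (ζ * s)(i)`, which by the
rearrangement over the pairs `i * k ≤ x`, `∑_{i ≤ x} f(i) ∑_{k ≤ x / i} g(k) = ∑_{n ≤ x} (f * g)(n)`,
equals `∑_{n ≤ x} (ζ * s * μ)(n) = ∑_{n ≤ x} s(n)`, by Möbius inversion `ζ * μ = 1`.
-/

open scoped ArithmeticFunction.zeta ArithmeticFunction.Moebius ArithmeticFunction.omega

namespace ArithmeticFunction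

theorem card_divisors_filter_squarefree {n : ℕ} (hn : n ≠ 0) :
    #{d ∈ n.divisors | Squarefree d} = 2 ^ ω n := by
  rw [card_eq_sum_ones, Nat.sum_divisors_filter_squarefree hn, sum_const, card_powerset,
    smul_eq_mul, mul_one, Nat.factors_eq, cardDistinctFactors_apply, ← List.card_toFinset]
  rfl

theorem pmul_moebius_moebius_apply (n : ℕ) : pmul (μ : ArithmeticFunction ℤ) μ n = |μ n| := by
  rw [pmul_apply, ← sq, moebius_sq, abs_moebius]

theorem coe_zeta_mul_pmul_moebius_moebius_apply {n : ℕ} (hn : n ≠ 0) :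
    ((ζ : ArithmeticFunction ℤ) * pmul μ μ) n = 2 ^ ω n := by
  simp_rw [coe_zeta_mul_apply, pmul_moebius_moebius_apply, abs_moebius, ← sum_filter,
    sum_const, card_divisors_filter_squarefree hn, nsmul_eq_mul, mul_one, Nat.cast_pow,
    Nat.cast_ofNat]

theorem sum_mertens_div_mul_eq_sum_mul_moebius (f : ArithmeticFunction ℤ) (x : ℕ) :
    ∑ i ∈ Icc 1 x, mertens (x / i) * f i = ∑ n ∈ Icc 1 x, (f * μ) n := by
  have Icc_one_eq_Ioc_zero (m : ℕ) : Icc 1 m = Ioc 0 m := Icc_add_one_left_eq_Ioc 0 m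
  simp_rw [Icc_one_eq_Ioc_zero, mul_comm (mertens _), mertens, Icc_one_eq_Ioc_zero,
    sum_Ioc_mul_eq_sum_sum]

end ArithmeticFunction

theorem stmt12_general (x : ℕ) :
    ∑ i ∈ Finset.Icc 1 x, mertens (x / i) * 2 ^ (ArithmeticFunction.cardDistinctFactors i) =
      ∑ i ∈ Finset.Icc 1 x, |ArithmeticFunction.moebius i| := by
  calc ∑ i ∈ Icc 1 x, mertens (x / i) * 2 ^ ω i
      = ∑ i ∈ Icc 1 x, mertens (x / i) * ((ζ : ArithmeticFunction ℤ) * pmul μ μ) i :=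
        sum_congr rfl fun i hi => by
          rw [coe_zeta_mul_pmul_moebius_moebius_apply (by simp at hi; omega)]
    _ = ∑ n ∈ Icc 1 x, ((ζ : ArithmeticFunction ℤ) * pmul μ μ * μ) n :=
        sum_mertens_div_mul_eq_sum_mul_moebius _ x
    _ = ∑ n ∈ Icc 1 x, pmul (μ : ArithmeticFunction ℤ) μ n := by
        rw [mul_comm (ζ : ArithmeticFunction ℤ), mul_assoc, coe_zeta_mul_moebius, mul_one]
    _ = ∑ n ∈ Icc 1 x, |μ n| := sum_congr rfl fun n _ => pmul_moebius_moebius_apply n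

theorem stmt12 (x : ℕ) (hx : 0 < x) :
    ∑ i ∈ Finset.Icc 1 x, mertens (x / i) * 2 ^ (ArithmeticFunction.cardDistinctFactors i) =
      ∑ i ∈ Finset.Icc 1 x, |ArithmeticFunction.moebius i| :=
  stmt12_general x
end

section
/- For every positive integer x, the sum over i from 1 to x of M(⌊x/i⌋)·d(i²) equals Σ_{i=1}^x 2^{ω(i)}, where d(n) = σ₀(n) is the number of divisors of n and ω(i) is the number of distinct prime factors of i. -/
/-!
Both `n ↦ σ₀(n ^ k)` and `n ↦ k ^ ω(n)` are multiplicative, and at a prime power `p ^ e` the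
divisor sum of the latter is `1 + e k = σ₀(p ^ (e k))`; hence `ζ * k ^ ω = σ₀(· ^ k)`. Möbius
inversion gives `σ₀(· ^ 2) * μ = 2 ^ ω`, and summing a Dirichlet convolution up to `x` by the
hyperbola identity `∑_{n ≤ x} (f * g)(n) = ∑_{i ≤ x} f(i) ∑_{k ≤ x / i} g(k)` yields the theorem.
-/

open Finset ArithmeticFunction

open scoped ArithmeticFunction.omega ArithmeticFunction.sigma ArithmeticFunction.Moebius
  ArithmeticFunction.zeta

namespace ArithmeticFunction

-- Both functions are forced to vanish at `0`; note that `σ₀(0 ^ 0) = σ₀(1) = 1`.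
def powCardDistinctFactors (k : ℕ) : ArithmeticFunction ℕ :=
  ⟨fun n => if n = 0 then 0 else k ^ ω n, rfl⟩

def sigmaZeroPow (k : ℕ) : ArithmeticFunction ℕ :=
  ⟨fun n => if n = 0 then 0 else σ 0 (n ^ k), rfl⟩

theorem powCardDistinctFactors_apply {k n : ℕ} (hn : n ≠ 0) :
    powCardDistinctFactors k n = k ^ ω n := if_neg hn

theorem sigmaZeroPow_apply {k n : ℕ} (hn : n ≠ 0) : sigmaZeroPow k n = σ 0 (n ^ k) := if_neg hn

theorem isMultiplicative_powCardDistinctFactors (k : ℕ) :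
    (powCardDistinctFactors k).IsMultiplicative := by
  refine ⟨by simp [powCardDistinctFactors], fun {m n} h => ?_⟩
  rcases eq_or_ne m 0 with rfl | hm
  · simp
  rcases eq_or_ne n 0 with rfl | hn
  · simp
  rw [powCardDistinctFactors_apply (mul_ne_zero hm hn), powCardDistinctFactors_apply hm,
    powCardDistinctFactors_apply hn, cardDistinctFactors_mul h, pow_add]

theorem isMultiplicative_sigmaZeroPow (k : ℕ) : (sigmaZeroPow k).IsMultiplicative := by
  refine ⟨by simp [sigmaZeroPow], fun {m n} h => ?_⟩
  rcases eq_or_ne m 0 with rfl | hm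
  · simp
  rcases eq_or_ne n 0 with rfl | hn
  · simp
  rw [sigmaZeroPow_apply (mul_ne_zero hm hn), sigmaZeroPow_apply hm, sigmaZeroPow_apply hn,
    mul_pow, isMultiplicative_sigma.map_mul_of_coprime (h.pow k k)]

theorem zeta_mul_powCardDistinctFactors (k : ℕ) :
    ζ * powCardDistinctFactors k = sigmaZeroPow k := by
  rw [IsMultiplicative.eq_iff_eq_on_prime_powers _
    (isMultiplicative_zeta.mul (isMultiplicative_powCardDistinctFactors k)) _
    (isMultiplicative_sigmaZeroPow k)]
  intro p e hp
  have hpow : ∀ i, p ^ i ≠ 0 := fun i => pow_ne_zero i hp.ne_zero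
  rw [zeta_mul_apply, Nat.sum_divisors_prime_pow hp, sum_range_succ', sigmaZeroPow_apply (hpow e),
    ← pow_mul, sigma_zero_apply_prime_pow hp]
  simp only [pow_zero, (isMultiplicative_powCardDistinctFactors k).map_one,
    powCardDistinctFactors_apply (hpow _),
    cardDistinctFactors_apply_prime_pow hp (Nat.succ_ne_zero _), pow_one, sum_const, card_range, smul_eq_mul]

theorem sigmaZeroPow_mul_moebius (k : ℕ) :
    (sigmaZeroPow k : ArithmeticFunction ℤ) * μ = powCardDistinctFactors k := by
  rw [← zeta_mul_powCardDistinctFactors, natCoe_mul, mul_comm, ← mul_assoc,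
    moebius_mul_coe_zeta, one_mul]

end ArithmeticFunction

theorem stmt13_general (x : ℕ) :
    ∑ i ∈ Finset.Icc 1 x, mertens (x / i) * (ArithmeticFunction.sigma 0 (i ^ 2) : ℤ) =
      ∑ i ∈ Finset.Icc 1 x, (2 : ℤ) ^ (ArithmeticFunction.cardDistinctFactors i) := by
  have hIcc : ∀ n : ℕ, Icc 1 n = Ioc 0 n := fun n => Icc_add_one_left_eq_Ioc 0 n
  rw [hIcc]
  calc ∑ i ∈ Ioc 0 x, mertens (x / i) * (σ 0 (i ^ 2) : ℤ)
      = ∑ i ∈ Ioc 0 x, (sigmaZeroPow 2 : ArithmeticFunction ℤ) i * ∑ k ∈ Ioc 0 (x / i), μ k :=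
        sum_congr rfl fun i hi => by
          rw [natCoe_apply, sigmaZeroPow_apply (mem_Ioc.1 hi).1.ne', mul_comm, mertens, hIcc]
    _ = ∑ n ∈ Ioc 0 x, ((sigmaZeroPow 2 : ArithmeticFunction ℤ) * μ) n :=
        (sum_Ioc_mul_eq_sum_sum _ _ x).symm
    _ = ∑ n ∈ Ioc 0 x, (2 : ℤ) ^ ω n := by
        refine sum_congr rfl fun n hn => ?_
        rw [sigmaZeroPow_mul_moebius, natCoe_apply,
          powCardDistinctFactors_apply (mem_Ioc.1 hn).1.ne', Nat.cast_pow, Nat.cast_ofNat]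

theorem stmt13 (x : ℕ) (hx : 0 < x) :
    ∑ i ∈ Finset.Icc 1 x, mertens (x / i) * (ArithmeticFunction.sigma 0 (i ^ 2) : ℤ) =
      ∑ i ∈ Finset.Icc 1 x, (2 : ℤ) ^ (ArithmeticFunction.cardDistinctFactors i) :=
  stmt13_general x
end

section
/- For every positive integer x, the sum over i from 1 to x of M(⌊x/i⌋)·d(i)² equals Σ_{i=1}^x d(i²), where d = σ₀ is the number-of-divisors function. -/
/-!
Both sides are partial sums of Dirichlet convolutions. Since `n ↦ σ₀(n²)` is multiplicative and
`∑_{d ∣ n} σ₀(d²) = σ₀(n)²`, Möbius inversion gives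
`σ₀(n²) = (σ₀² * μ)(n)`; and `∑_{n ≤ x} (f * μ)(n) = ∑_{i ≤ x} f(i) M(⌊x/i⌋)` by grouping the
pairs `(i, k)` with `i k ≤ x` according to `i`.
-/

open Finset ArithmeticFunction

open scoped ArithmeticFunction.sigma ArithmeticFunction.zeta ArithmeticFunction.Moebius

namespace ArithmeticFunction

def sigmaZeroOfSq : ArithmeticFunction ℕ := ⟨fun n => σ 0 (n ^ 2), by simp⟩

@[simp]
theorem sigmaZeroOfSq_apply (n : ℕ) : sigmaZeroOfSq n = σ 0 (n ^ 2) := rfl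

theorem isMultiplicative_sigmaZeroOfSq : sigmaZeroOfSq.IsMultiplicative :=
  ⟨by simp, fun h => by
    simpa only [sigmaZeroOfSq_apply, mul_pow] using
      isMultiplicative_sigma.map_mul_of_coprime (h.pow 2 2)⟩

-- On the prime power `p ^ i` both sides equal `∑_{j ≤ i} (2j + 1) = (i + 1)²`.
theorem sigmaZeroOfSq_mul_zeta : sigmaZeroOfSq * ζ = (σ 0).ppow 2 := by
  rw [IsMultiplicative.eq_iff_eq_on_prime_powers _
    (isMultiplicative_sigmaZeroOfSq.mul isMultiplicative_zeta) _ isMultiplicative_sigma.ppow]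
  intro p i hp
  have hsq (j : ℕ) : sigmaZeroOfSq (p ^ j) = 2 * j + 1 := by
    rw [sigmaZeroOfSq_apply, ← pow_mul, sigma_zero_apply_prime_pow hp, mul_comm]
  rw [mul_zeta_apply, Nat.sum_divisors_prime_pow hp, ppow_apply two_pos,
    sigma_zero_apply_prime_pow hp]
  simp only [hsq]
  induction i with
  | zero => simp
  | succ n ih => rw [sum_range_succ, ih]; ring

theorem coe_sigmaZero_ppow_two_mul_moebius :
    (((σ 0).ppow 2 : ArithmeticFunction ℕ) : ArithmeticFunction ℤ) * μ = sigmaZeroOfSq := by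
  rw [← sigmaZeroOfSq_mul_zeta, natCoe_mul, mul_assoc, coe_zeta_mul_moebius, mul_one]

end ArithmeticFunction

theorem sum_Icc_mertens_div_mul (f : ArithmeticFunction ℤ) (x : ℕ) :
    ∑ i ∈ Icc 1 x, mertens (x / i) * f i = ∑ n ∈ Icc 1 x, (f * μ) n := by
  have hIcc (n : ℕ) : Icc 1 n = Ioc 0 n := Icc_add_one_left_eq_Ioc 0 n
  simp only [hIcc, mertens, sum_Ioc_mul_eq_sum_sum, mul_comm (f _)]

theorem stmt14_general (x : ℕ) :
    ∑ i ∈ Finset.Icc 1 x, mertens (x / i) * (ArithmeticFunction.sigma 0 i : ℤ) ^ 2 =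
      ∑ i ∈ Finset.Icc 1 x, (ArithmeticFunction.sigma 0 (i ^ 2) : ℤ) := by
  have h := sum_Icc_mertens_div_mul ((σ 0).ppow 2 : ArithmeticFunction ℕ) x
  rw [coe_sigmaZero_ppow_two_mul_moebius] at h
  simpa [ppow_apply two_pos] using h

theorem stmt14 (x : ℕ) (hx : 0 < x) :
    ∑ i ∈ Finset.Icc 1 x, mertens (x / i) * (ArithmeticFunction.sigma 0 i : ℤ) ^ 2 =
      ∑ i ∈ Finset.Icc 1 x, (ArithmeticFunction.sigma 0 (i ^ 2) : ℤ) :=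
  stmt14_general x
end

section
/- For every positive integer x, the sum over i from 1 to x of M(⌊x/i⌋)·(i/φ(i)) equals Σ_{i=1}^x μ(i)²/φ(i). -/
/-!
With `g n = n / φ n` and `h n = μ n ^ 2 / φ n`, both multiplicative, the identity
`n / φ n = ∑_{d ∣ n} h d` says `h * ζ = g`; it suffices to check it on prime powers, where both
sides are `p / (p - 1)`. Möbius inversion gives `g * μ = h`, and grouping the pairs `(i, j)` with
`i * j ≤ x` by `i` turns `∑_{n ≤ x} (g * μ) n` into `∑_{i ≤ x} g i * M(⌊x / i⌋)`.
-/

open Finset ArithmeticFunction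

open scoped ArithmeticFunction.Moebius ArithmeticFunction.zeta Nat

theorem sum_Icc_mertens_div_mul_eq_sum_mul_moebius {R : Type*} [CommRing R]
    (g : ArithmeticFunction R) (x : ℕ) :
    ∑ i ∈ Icc 1 x, (mertens (x / i) : R) * g i = ∑ n ∈ Icc 1 x, (g * μ) n := by
  have hIcc (n : ℕ) : Icc 1 n = Ioc 0 n := Icc_add_one_left_eq_Ioc 0 n
  simp only [hIcc, sum_Ioc_mul_eq_sum_sum, mertens, mul_comm (g _), Int.cast_sum, intCoe_apply]

namespace ArithmeticFunction

variable (K : Type*) [Field K] [CharZero K]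

def divTotient : ArithmeticFunction K := ⟨fun n => n / φ n, by simp⟩

def moebiusSqDivTotient : ArithmeticFunction K := ⟨fun n => (μ n : K) ^ 2 / φ n, by simp⟩

variable {K}

@[simp]
theorem divTotient_apply (n : ℕ) : divTotient K n = n / φ n := rfl

@[simp]
theorem moebiusSqDivTotient_apply (n : ℕ) : moebiusSqDivTotient K n = (μ n : K) ^ 2 / φ n := rfl

theorem isMultiplicative_divTotient : (divTotient K).IsMultiplicative :=
  ⟨by simp, fun {m n} hmn => by simp [Nat.totient_mul hmn, mul_div_mul_comm]⟩

theorem isMultiplicative_moebiusSqDivTotient : (moebiusSqDivTotient K).IsMultiplicative :=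
  ⟨by simp, fun {m n} hmn => by
    simp [Nat.totient_mul hmn, isMultiplicative_moebius.map_mul_of_coprime hmn, mul_pow,
      mul_div_mul_comm]⟩

theorem moebiusSqDivTotient_mul_zeta : moebiusSqDivTotient K * ζ = divTotient K := by
  refine ((isMultiplicative_moebiusSqDivTotient.mul isMultiplicative_zeta.natCast)
    |>.eq_iff_eq_on_prime_powers _ _ isMultiplicative_divTotient).mpr fun p k hp => ?_
  rw [coe_mul_zeta_apply, Nat.sum_divisors_prime_pow hp]
  have hp0 : (p : K) ≠ 0 := by exact_mod_cast hp.ne_zero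
  have hp1 : (p : K) - 1 ≠ 0 := sub_ne_zero.mpr (by exact_mod_cast hp.ne_one)
  rcases k with _ | k
  · simp
  have hvanish : ∀ i ∈ range k, moebiusSqDivTotient K (p ^ (i + 2)) = 0 := fun i _ => by
    simp [moebius_apply_prime_pow hp]
  rw [sum_range_succ', sum_range_succ', sum_eq_zero hvanish, divTotient_apply,
    Nat.totient_prime_pow_succ hp]
  simp [moebius_apply_prime hp, Nat.totient_prime hp, Nat.cast_sub hp.one_le]
  field_simp
  ring

theorem divTotient_mul_moebius : divTotient K * μ = moebiusSqDivTotient K := by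
  rw [← moebiusSqDivTotient_mul_zeta, mul_assoc, coe_zeta_mul_coe_moebius, mul_one]

end ArithmeticFunction

theorem stmt15_general (x : ℕ) :
    ∑ i ∈ Finset.Icc 1 x, (mertens (x / i) : ℚ) * ((i : ℚ) / (Nat.totient i : ℚ)) =
      ∑ i ∈ Finset.Icc 1 x,
        (ArithmeticFunction.moebius i : ℚ) ^ 2 / (Nat.totient i : ℚ) := by
  simpa [divTotient_mul_moebius] using
    sum_Icc_mertens_div_mul_eq_sum_mul_moebius (divTotient ℚ) x

theorem stmt15 (x : ℕ) (hx : 0 < x) :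
    ∑ i ∈ Finset.Icc 1 x, (mertens (x / i) : ℚ) * ((i : ℚ) / (Nat.totient i : ℚ)) =
      ∑ i ∈ Finset.Icc 1 x,
        (ArithmeticFunction.moebius i : ℚ) ^ 2 / (Nat.totient i : ℚ) :=
  stmt15_general x
end

section
/- For every positive integer x, A(x)/√(x(x+1)(2x+1)/6) ≤ √(Σ_{i=1}^x M(⌊x/i⌋)²), where A(x) = Σ_{i=1}^x φ(i). -/
open Finset ArithmeticFunction

/-!
Möbius inversion of `∑_{d ∣ n} φ(d) = n` gives `∑_{ab = n} μ(b) a = φ(n)`. Summing over `n ≤ x` and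
grouping the pairs `(a, b)` with `ab ≤ x` by `a` yields `A(x) = ∑_{i ≤ x} M(⌊x/i⌋) i`, and the
Cauchy–Schwarz inequality together with `∑_{i ≤ x} i² = x(x+1)(2x+1)/6` bounds this sum.
-/

open scoped Nat ArithmeticFunction.Moebius

theorem Nat.sum_Icc_sum_Icc_div_eq_sum_divisorsAntidiagonal {M : Type*} [AddCommMonoid M]
    (x : ℕ) (f : ℕ → ℕ → M) :
    ∑ i ∈ Icc 1 x, ∑ j ∈ Icc 1 (x / i), f i j =
      ∑ n ∈ Icc 1 x, ∑ p ∈ n.divisorsAntidiagonal, f p.1 p.2 := by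
  rw [sum_sigma', sum_sigma']
  refine sum_bij' (fun p _ => ⟨p.1 * p.2, (p.1, p.2)⟩) (fun q _ => ⟨q.2.1, q.2.2⟩)
    ?_ ?_ (fun _ _ => rfl) ?_ (fun _ _ => rfl)
  · rintro ⟨i, j⟩ h
    simp only [mem_sigma, mem_Icc, Nat.mem_divisorsAntidiagonal] at h ⊢
    obtain ⟨⟨hi, -⟩, hj, hjx⟩ := h
    have hij : j * i ≤ x := (Nat.le_div_iff_mul_le hi).1 hjx
    have hij_pos : 0 < i * j := by positivity
    exact ⟨⟨hij_pos, by linarith⟩, trivial, hij_pos.ne'⟩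
  · rintro ⟨n, a, b⟩ h
    simp only [mem_sigma, mem_Icc, Nat.mem_divisorsAntidiagonal] at h ⊢
    obtain ⟨⟨hn, hnx⟩, rfl, -⟩ := h
    have ha : 0 < a := Nat.pos_of_mul_pos_right hn
    have hb : 0 < b := Nat.pos_of_mul_pos_left hn
    refine ⟨⟨ha, le_trans (Nat.le_mul_of_pos_right a hb) hnx⟩, hb, ?_⟩
    exact (Nat.le_div_iff_mul_le ha).2 (by linarith)
  · rintro ⟨n, a, b⟩ h
    simp only [mem_sigma, Nat.mem_divisorsAntidiagonal] at h
    rw [h.2.1]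

theorem sum_divisorsAntidiagonal_moebius_mul_eq_totient {n : ℕ} (hn : 0 < n) :
    ∑ p ∈ n.divisorsAntidiagonal, μ p.2 * p.1 = (φ n : ℤ) := by
  have hsum : ∀ m : ℕ, m > 0 → ∑ d ∈ m.divisors, (φ d : ℤ) = m := fun m _ => by
    exact_mod_cast Nat.sum_totient m
  rw [← Nat.map_swap_divisorsAntidiagonal, sum_map]
  simpa using sum_eq_iff_sum_mul_moebius_eq.mp hsum n hn

theorem sum_mertens_div_mul_eq_sum_totient (x : ℕ) :
    ∑ i ∈ Icc 1 x, mertens (x / i) * i = ∑ n ∈ Icc 1 x, (φ n : ℤ) := by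
  simp only [mertens, sum_mul]
  rw [Nat.sum_Icc_sum_Icc_div_eq_sum_divisorsAntidiagonal x (fun i j => μ j * i)]
  exact sum_congr rfl fun n hn =>
    sum_divisorsAntidiagonal_moebius_mul_eq_totient (by simp at hn; omega)

theorem Nat.sum_Icc_sq (x : ℕ) :
    ∑ i ∈ Icc 1 x, (i : ℝ) ^ 2 = x * (x + 1) * (2 * x + 1) / 6 := by
  induction x with
  | zero => simp
  | succ n ih =>
    rw [sum_Icc_succ_top (by omega), ih]
    push_cast
    ring

theorem stmt16_general (x : ℕ) :
    (∑ i ∈ Finset.Icc 1 x, (Nat.totient i : ℝ)) /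
        Real.sqrt ((x * (x + 1) * (2 * x + 1) : ℝ) / 6) ≤
      Real.sqrt (∑ i ∈ Finset.Icc 1 x, (mertens (x / i) : ℝ) ^ 2) := by
  have hA : ∑ i ∈ Icc 1 x, (φ i : ℝ) = ∑ i ∈ Icc 1 x, (mertens (x / i) : ℝ) * i := by
    exact_mod_cast (sum_mertens_div_mul_eq_sum_totient x).symm
  rw [← Nat.sum_Icc_sq, hA]
  exact div_le_of_le_mul₀ (Real.sqrt_nonneg _) (Real.sqrt_nonneg _)
    (Real.sum_mul_le_sqrt_mul_sqrt _ _ _)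

theorem stmt16 (x : ℕ) (hx : 0 < x) :
    (∑ i ∈ Finset.Icc 1 x, (Nat.totient i : ℝ)) /
        Real.sqrt ((x * (x + 1) * (2 * x + 1) : ℝ) / 6) ≤
      Real.sqrt (∑ i ∈ Finset.Icc 1 x, (mertens (x / i) : ℝ) ^ 2) :=
  stmt16_general x
end
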